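/- Fix points t₁, …, t_N ∈ ℝ^d, values y₁, …, y_N ∈ ℝ, weights w_j ≥ 0, λ > 0, a symmetric positive semidefinite N×N matrix E, and an N×(d+1) matrix T of full column rank. Then the constrained quadratic minimization inf{ ‖W^{1/2}(y − E s − T α)‖² + λ sᵀ E s : s ∈ ℝ^N, α ∈ ℝ^{d+1}, Tᵀ s = 0 } (with W = diag(w₁,…,w_N), y = (y₁,…,y_N)) is attained, and any minimizer (s, α) together with a Lagrange multiplier m ∈ ℝ^{d+1} satisfies the linear system: 2EWE s + 2λE s + 2EWT α + T m = 2EW y, 2TᵀWE s + 2TᵀWT α = 2TᵀW y, Tᵀ s = 0. -/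

import Mathlib

/-!
Writing `E = Bᴴ B`, the objective is the squared Euclidean distance from `(√w y, 0)` to
`(√w (E s + T α), √λ B s)`, which depends linearly on `(s, α)`; so it is minimised over the
subspace `Tᵀ s = 0` by orthogonal projection onto the image of that subspace.

At a minimiser, the objective along a feasible line `(s + t u, α + t β)` is a quadratic in `t`
minimised at `t = 0`, so its linear coefficient vanishes. Taking `u = 0` gives `Tᵀ W r = 0` for
the residual `r = y - E s - T α`, which is the second equation; taking `β = 0` shows that
`E W r - λ E s` is orthogonal to `ker Tᵀ`, hence equals `T m` for some `m`, and `2 m` is the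
multiplier.
-/

open Matrix

theorem Matrix.exists_mulVec_eq_of_forall_dotProduct_eq_zero {m n : Type*} [Fintype m]
    [Fintype n] [DecidableEq m] [DecidableEq n] (A : Matrix m n ℝ) (g : m → ℝ)
    (h : ∀ u, Aᵀ *ᵥ u = 0 → u ⬝ᵥ g = 0) : ∃ x, A *ᵥ x = g := by
  have hg : WithLp.toLp 2 g ∈ (Aᵀ.toEuclideanLin).kerᗮ := by
    refine (Submodule.mem_orthogonal _ _).2 fun u hu => ?_
    rw [EuclideanSpace.inner_toLp_toLp]
    have hu' : Aᵀ *ᵥ u.ofLp = 0 := by simpa using congrArg WithLp.ofLp (LinearMap.mem_ker.1 hu)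
    simpa [dotProduct_comm] using h _ hu'
  rw [LinearMap.orthogonal_ker, ← toEuclideanLin_conjTranspose_eq_adjoint] at hg
  obtain ⟨x, hx⟩ := hg
  exact ⟨x, by simpa using congrArg WithLp.ofLp hx⟩

theorem exists_forall_norm_sub_map_le {E F : Type*} [AddCommGroup E] [Module ℝ E]
    [NormedAddCommGroup F] [InnerProductSpace ℝ F] [FiniteDimensional ℝ F]
    (f : E →ₗ[ℝ] F) (V : Submodule ℝ E) (b : F) :
    ∃ x ∈ V, ∀ x' ∈ V, ‖b - f x‖ ≤ ‖b - f x'‖ := by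
  set K := V.map f
  obtain ⟨x, hx, hfx⟩ := K.starProjection_apply_mem b
  refine ⟨x, hx, fun x' hx' => ?_⟩
  rw [hfx, K.starProjection_minimal]
  exact ciInf_le ⟨0, by rintro _ ⟨_, rfl⟩; positivity⟩ (⟨f x', Submodule.mem_map_of_mem hx'⟩ : K)

theorem Matrix.IsSymm.dotProduct_mulVec_comm {n R : Type*} [Fintype n] [CommSemiring R]
    {A : Matrix n n R} (hA : A.IsSymm) (x y : n → R) : x ⬝ᵥ A *ᵥ y = y ⬝ᵥ A *ᵥ x := by
  rw [dotProduct_mulVec, ← mulVec_transpose, hA.eq, dotProduct_comm]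

theorem Matrix.IsSymm.dotProduct_mulVec_add_smul {n R : Type*} [Fintype n] [CommRing R]
    {A : Matrix n n R} (hA : A.IsSymm) (x v : n → R) (t : R) :
    (x + t • v) ⬝ᵥ A *ᵥ (x + t • v) =
      x ⬝ᵥ A *ᵥ x + 2 * t * (v ⬝ᵥ A *ᵥ x) + t ^ 2 * (v ⬝ᵥ A *ᵥ v) := by
  simp only [mulVec_add, mulVec_smul, dotProduct_add, add_dotProduct, dotProduct_smul,
    smul_dotProduct, smul_eq_mul, hA.dotProduct_mulVec_comm x v]
  ring

theorem eq_zero_of_forall_le_sub_two_mul_add_sq_mul {a b c : ℝ}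
    (h : ∀ t : ℝ, c ≤ c - 2 * t * b + t ^ 2 * a) : b = 0 := by
  have hb := discrim_le_zero (a := a) (b := -2 * b) (c := 0) fun t => by nlinarith [h t]
  rw [discrim] at hb
  nlinarith [sq_nonneg b]

variable {n p k : Type*} [Fintype n] [Fintype p] [Fintype k]

def smoothingObjective (y w : n → ℝ) (lam : ℝ) (E : Matrix n n ℝ) (T : Matrix n p ℝ)
    (s : n → ℝ) (α : p → ℝ) : ℝ :=
  (∑ i, w i * (y i - (E *ᵥ s + T *ᵥ α) i) ^ 2) + lam * (s ⬝ᵥ E *ᵥ s)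

noncomputable def smoothingFeatureMap (w : n → ℝ) (lam : ℝ) (B : Matrix k n ℝ) (E : Matrix n n ℝ)
    (T : Matrix n p ℝ) : (n → ℝ) × (p → ℝ) →ₗ[ℝ] EuclideanSpace ℝ (n ⊕ k) where
  toFun x := WithLp.toLp 2 <| Sum.elim (fun i => √(w i) * (E *ᵥ x.1 + T *ᵥ x.2) i)
    (fun j => √lam * (B *ᵥ x.1) j)
  map_add' x x' := by ext (i | j) <;> simp [mulVec_add] <;> ring
  map_smul' c x := by ext (i | j) <;> simp [mulVec_smul] <;> ring

theorem smoothingObjective_conjTranspose_mul_self_eq_norm_sq (y w : n → ℝ) (hw : ∀ i, 0 ≤ w i)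
    {lam : ℝ} (hlam : 0 ≤ lam) (B : Matrix k n ℝ) (T : Matrix n p ℝ) (s : n → ℝ) (α : p → ℝ) :
    smoothingObjective y w lam (Bᴴ * B) T s α =
      ‖WithLp.toLp 2 (Sum.elim (fun i => √(w i) * y i) 0) -
        smoothingFeatureMap w lam B (Bᴴ * B) T (s, α)‖ ^ 2 := by
  have hB : s ⬝ᵥ (Bᴴ * B) *ᵥ s = ∑ j, (B *ᵥ s) j ^ 2 := by
    rw [← mulVec_mulVec, dotProduct_mulVec, conjTranspose_eq_transpose_of_trivial,
      vecMul_transpose]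
    simp only [dotProduct, sq]
  rw [EuclideanSpace.real_norm_sq_eq, Fintype.sum_sum_type, smoothingObjective, hB, Finset.mul_sum]
  simp [smoothingFeatureMap, ← mul_sub, mul_pow, Real.sq_sqrt, hw, hlam]

open scoped MatrixOrder in
theorem exists_forall_smoothingObjective_le [DecidableEq n]
    (y w : n → ℝ) (hw : ∀ i, 0 ≤ w i) {lam : ℝ} (hlam : 0 ≤ lam) {E : Matrix n n ℝ}
    (hE : E.PosSemidef) (T : Matrix n p ℝ) :
    ∃ s α, Tᵀ *ᵥ s = 0 ∧ ∀ s' α', Tᵀ *ᵥ s' = 0 →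
      smoothingObjective y w lam E T s α ≤ smoothingObjective y w lam E T s' α' := by
  obtain ⟨B, rfl⟩ := CStarAlgebra.nonneg_iff_eq_star_mul_self.mp hE.nonneg
  rw [star_eq_conjTranspose]
  obtain ⟨⟨s, α⟩, hV, hmin⟩ := exists_forall_norm_sub_map_le
    (smoothingFeatureMap w lam B (Bᴴ * B) T)
    (LinearMap.ker (Tᵀ.mulVecLin ∘ₗ LinearMap.fst ℝ (n → ℝ) (p → ℝ)))
    (WithLp.toLp 2 (Sum.elim (fun i => √(w i) * y i) 0))
  refine ⟨s, α, hV, fun s' α' hs' => ?_⟩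
  simp only [smoothingObjective_conjTranspose_mul_self_eq_norm_sq y w hw hlam]
  gcongr
  exact hmin (s', α') hs'

theorem smoothingObjective_eq_dotProduct [DecidableEq n] (y w : n → ℝ) (lam : ℝ)
    (E : Matrix n n ℝ) (T : Matrix n p ℝ) (s : n → ℝ) (α : p → ℝ) :
    smoothingObjective y w lam E T s α =
      (y - (E *ᵥ s + T *ᵥ α)) ⬝ᵥ diagonal w *ᵥ (y - (E *ᵥ s + T *ᵥ α)) +
        lam * (s ⬝ᵥ E *ᵥ s) := by
  simp only [smoothingObjective, dotProduct, mulVec_diagonal, Pi.sub_apply]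
  congr 1
  exact Finset.sum_congr rfl fun i _ => by ring

theorem smoothingObjective_add_smul [DecidableEq n] (y w : n → ℝ) (lam : ℝ) {E : Matrix n n ℝ}
    (hE : E.IsSymm) (T : Matrix n p ℝ) (s u : n → ℝ) (α β : p → ℝ) (t : ℝ) :
    smoothingObjective y w lam E T (s + t • u) (α + t • β) =
      smoothingObjective y w lam E T s α
        - 2 * t * ((E *ᵥ u + T *ᵥ β) ⬝ᵥ diagonal w *ᵥ (y - (E *ᵥ s + T *ᵥ α))
          - lam * (u ⬝ᵥ E *ᵥ s))
        + t ^ 2 * ((E *ᵥ u + T *ᵥ β) ⬝ᵥ diagonal w *ᵥ (E *ᵥ u + T *ᵥ β)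
          + lam * (u ⬝ᵥ E *ᵥ u)) := by
  have hr : y - (E *ᵥ (s + t • u) + T *ᵥ (α + t • β)) =
      y - (E *ᵥ s + T *ᵥ α) + t • -(E *ᵥ u + T *ᵥ β) := by
    simp only [mulVec_add, mulVec_smul]
    module
  rw [smoothingObjective_eq_dotProduct, smoothingObjective_eq_dotProduct, hr,
    (isSymm_diagonal w).dotProduct_mulVec_add_smul, hE.dotProduct_mulVec_add_smul]
  simp only [neg_dotProduct, mulVec_neg, dotProduct_neg, neg_neg]
  ring

theorem dotProduct_residual_eq_of_forall_le [DecidableEq n] (y w : n → ℝ) (lam : ℝ)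
    {E : Matrix n n ℝ} (hE : E.IsSymm) {T : Matrix n p ℝ} {s : n → ℝ} {α : p → ℝ}
    (hs : Tᵀ *ᵥ s = 0) (hmin : ∀ s' α', Tᵀ *ᵥ s' = 0 →
      smoothingObjective y w lam E T s α ≤ smoothingObjective y w lam E T s' α')
    {u : n → ℝ} (hu : Tᵀ *ᵥ u = 0) (β : p → ℝ) :
    (E *ᵥ u + T *ᵥ β) ⬝ᵥ diagonal w *ᵥ (y - (E *ᵥ s + T *ᵥ α)) = lam * (u ⬝ᵥ E *ᵥ s) := by
  apply sub_eq_zero.mp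
  apply eq_zero_of_forall_le_sub_two_mul_add_sq_mul
  intro t
  have hfeas : Tᵀ *ᵥ (s + t • u) = 0 := by simp [mulVec_add, mulVec_smul, hs, hu]
  simpa only [smoothingObjective_add_smul y w lam hE] using hmin _ (α + t • β) hfeas

theorem exists_lagrange_multiplier_of_forall_le [DecidableEq n] [DecidableEq p]
    (y w : n → ℝ) (lam : ℝ) {E : Matrix n n ℝ} (hE : E.IsSymm) {T : Matrix n p ℝ}
    {s : n → ℝ} {α : p → ℝ} (hs : Tᵀ *ᵥ s = 0) (hmin : ∀ s' α', Tᵀ *ᵥ s' = 0 →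
      smoothingObjective y w lam E T s α ≤ smoothingObjective y w lam E T s' α') :
    ∃ m : p → ℝ,
      (2 : ℝ) • ((E * diagonal w * E) *ᵥ s) + (2 * lam) • E *ᵥ s +
          (2 : ℝ) • ((E * diagonal w * T) *ᵥ α) + T *ᵥ m = (2 : ℝ) • ((E * diagonal w) *ᵥ y) ∧
      (2 : ℝ) • ((Tᵀ * diagonal w * E) *ᵥ s) + (2 : ℝ) • ((Tᵀ * diagonal w * T) *ᵥ α) =
        (2 : ℝ) • ((Tᵀ * diagonal w) *ᵥ y) := by
  set Wr := diagonal w *ᵥ (y - (E *ᵥ s + T *ᵥ α)) with hWr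
  have hT : Tᵀ *ᵥ Wr = 0 := by
    have h := dotProduct_residual_eq_of_forall_le y w lam hE hs hmin (mulVec_zero Tᵀ) (Tᵀ *ᵥ Wr)
    rwa [mulVec_zero, zero_add, zero_dotProduct, mul_zero, dotProduct_comm, dotProduct_mulVec,
      ← mulVec_transpose, dotProduct_self_eq_zero] at h
  have hperp : ∀ u, Tᵀ *ᵥ u = 0 → u ⬝ᵥ (E *ᵥ Wr - lam • E *ᵥ s) = 0 := fun u hu => by
    have h := dotProduct_residual_eq_of_forall_le y w lam hE hs hmin hu 0
    rw [mulVec_zero, add_zero, dotProduct_comm, ← hE.dotProduct_mulVec_comm] at h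
    rw [dotProduct_sub, dotProduct_smul, h, smul_eq_mul, sub_self]
  obtain ⟨m, hm⟩ := T.exists_mulVec_eq_of_forall_dotProduct_eq_zero _ hperp
  refine ⟨(2 : ℝ) • m, ?_, ?_⟩
  · simp only [← mulVec_mulVec, mulVec_smul, hm, hWr, mulVec_sub, mulVec_add]
    module
  · simp only [hWr, mulVec_sub, mulVec_add] at hT
    simp only [← mulVec_mulVec]
    rw [sub_eq_zero] at hT
    rw [← smul_add, ← hT]

theorem stmt_19_general (N d : ℕ) (y w : Fin N → ℝ) (hw : ∀ i, 0 ≤ w i)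
    (lam : ℝ) (hlam : 0 < lam)
    (E : Matrix (Fin N) (Fin N) ℝ) (hE : E.PosSemidef)
    (T : Matrix (Fin N) (Fin (d + 1)) ℝ) :
    let W : Matrix (Fin N) (Fin N) ℝ := Matrix.diagonal w
    let J : (Fin N → ℝ) → (Fin (d + 1) → ℝ) → ℝ := fun s α =>
      (∑ i, w i * (y i - (E.mulVec s + T.mulVec α) i) ^ 2) + lam * (s ⬝ᵥ E.mulVec s)
    (∃ s α, T.transpose.mulVec s = 0 ∧
      ∀ s' α', T.transpose.mulVec s' = 0 → J s α ≤ J s' α') ∧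
    (∀ s α, T.transpose.mulVec s = 0 →
      (∀ s' α', T.transpose.mulVec s' = 0 → J s α ≤ J s' α') →
      ∃ m : Fin (d + 1) → ℝ,
        (2 : ℝ) • ((E * W * E).mulVec s) + (2 * lam) • E.mulVec s +
            (2 : ℝ) • ((E * W * T).mulVec α) + T.mulVec m =
          (2 : ℝ) • ((E * W).mulVec y) ∧
        (2 : ℝ) • ((T.transpose * W * E).mulVec s) +
            (2 : ℝ) • ((T.transpose * W * T).mulVec α) =
          (2 : ℝ) • ((T.transpose * W).mulVec y) ∧
        T.transpose.mulVec s = 0) := by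
  intro W J
  refine ⟨exists_forall_smoothingObjective_le y w hw hlam.le hE T, fun s α hs hmin => ?_⟩
  obtain ⟨m, h₁, h₂⟩ := exists_lagrange_multiplier_of_forall_le y w lam
    (isHermitian_iff_isSymm.mp hE.isHermitian) hs hmin
  exact ⟨m, h₁, h₂, hs⟩

theorem stmt_19 (N d : ℕ) (y w : Fin N → ℝ) (hw : ∀ i, 0 ≤ w i)
    (lam : ℝ) (hlam : 0 < lam)
    (E : Matrix (Fin N) (Fin N) ℝ) (hE : E.PosSemidef)
    (T : Matrix (Fin N) (Fin (d + 1)) ℝ)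
    (hT : LinearIndependent ℝ (fun j : Fin (d + 1) => fun i => T i j)) :
    let W : Matrix (Fin N) (Fin N) ℝ := Matrix.diagonal w
    let J : (Fin N → ℝ) → (Fin (d + 1) → ℝ) → ℝ := fun s α =>
      (∑ i, w i * (y i - (E.mulVec s + T.mulVec α) i) ^ 2) + lam * (s ⬝ᵥ E.mulVec s)
    (∃ s α, T.transpose.mulVec s = 0 ∧
      ∀ s' α', T.transpose.mulVec s' = 0 → J s α ≤ J s' α') ∧
    (∀ s α, T.transpose.mulVec s = 0 →
      (∀ s' α', T.transpose.mulVec s' = 0 → J s α ≤ J s' α') →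
      ∃ m : Fin (d + 1) → ℝ,
        (2 : ℝ) • ((E * W * E).mulVec s) + (2 * lam) • E.mulVec s +
            (2 : ℝ) • ((E * W * T).mulVec α) + T.mulVec m =
          (2 : ℝ) • ((E * W).mulVec y) ∧
        (2 : ℝ) • ((T.transpose * W * E).mulVec s) +
            (2 : ℝ) • ((T.transpose * W * T).mulVec α) =
          (2 : ℝ) • ((T.transpose * W).mulVec y) ∧
        T.transpose.mulVec s = 0) :=
  stmt_19_general N d y w hw lam hlam E hE T
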